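/- arXiv:2312.12177 — 5 statements merged into one kernel-verified Lean document; each statement's English description precedes it below -/
import Mathlib

section
/- Let A be a complex n×n matrix and B a complex m×m matrix, let N be a natural number, let a_{jk} (0 ≤ j,k ≤ N) be complex coefficients, and set P(λ,μ) = Σ_{j,k=0}^{N} a_{jk} λ^j μ^k. If P(λ,μ) ≠ 0 for every eigenvalue λ of B and every eigenvalue μ of A, then for every complex m×n matrix Y there exists a unique m×n matrix H satisfying Σ_{j,k=0}^{N} a_{jk} B^j H A^k = Y. -/
open Matrix

namespace KreinAux

variable {m n : ℕ}

/-- left multiplication by `B` as a linear endomorphism of rectangular matrices -/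
noncomputable def lmul (B : Matrix (Fin m) (Fin m) ℂ) :
    Module.End ℂ (Matrix (Fin m) (Fin n) ℂ) where
  toFun H := B * H
  map_add' H K := Matrix.mul_add B H K
  map_smul' c H := (Matrix.mul_smul B c H)

/-- right multiplication by `A` as a linear endomorphism -/
noncomputable def rmul (A : Matrix (Fin n) (Fin n) ℂ) :
    Module.End ℂ (Matrix (Fin m) (Fin n) ℂ) where
  toFun H := H * A
  map_add' H K := Matrix.add_mul H K A
  map_smul' c H := Matrix.smul_mul c H A

@[simp] lemma lmul_apply (B : Matrix (Fin m) (Fin m) ℂ) (H : Matrix (Fin m) (Fin n) ℂ) :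
    lmul B H = B * H := rfl

@[simp] lemma rmul_apply (A : Matrix (Fin n) (Fin n) ℂ) (H : Matrix (Fin m) (Fin n) ℂ) :
    rmul A H = H * A := rfl

lemma lmul_pow (B : Matrix (Fin m) (Fin m) ℂ) (j : ℕ) (H : Matrix (Fin m) (Fin n) ℂ) :
    ((lmul B) ^ j) H = B ^ j * H := by
  induction j generalizing H with
  | zero => simp
  | succ j ih =>
      rw [pow_succ, Module.End.mul_apply, lmul_apply, ih, pow_succ, Matrix.mul_assoc]

lemma rmul_pow (A : Matrix (Fin n) (Fin n) ℂ) (k : ℕ) (H : Matrix (Fin m) (Fin n) ℂ) :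
    ((rmul A) ^ k) H = H * A ^ k := by
  induction k generalizing H with
  | zero => simp
  | succ k ih =>
      rw [pow_succ, Module.End.mul_apply, rmul_apply, ih, pow_succ', Matrix.mul_assoc]

lemma commute_lmul_rmul (B : Matrix (Fin m) (Fin m) ℂ) (A : Matrix (Fin n) (Fin n) ℂ) :
    Commute (lmul (n := n) B) (rmul A) := by
  ext H : 1
  simp [Module.End.mul_apply, Matrix.mul_assoc]

variable {N : ℕ}

/-- the Lyapunov operator -/
noncomputable def Lop (A : Matrix (Fin n) (Fin n) ℂ) (B : Matrix (Fin m) (Fin m) ℂ)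
    (a : Fin (N + 1) → Fin (N + 1) → ℂ) : Module.End ℂ (Matrix (Fin m) (Fin n) ℂ) :=
  ∑ j : Fin (N + 1), ∑ k : Fin (N + 1),
    a j k • ((lmul B) ^ (j : ℕ) * (rmul A) ^ (k : ℕ))

lemma Lop_apply (A : Matrix (Fin n) (Fin n) ℂ) (B : Matrix (Fin m) (Fin m) ℂ)
    (a : Fin (N + 1) → Fin (N + 1) → ℂ) (H : Matrix (Fin m) (Fin n) ℂ) :
    Lop A B a H = ∑ j : Fin (N + 1), ∑ k : Fin (N + 1),
      a j k • (B ^ (j : ℕ) * H * A ^ (k : ℕ)) := by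
  simp only [Lop, LinearMap.sum_apply, LinearMap.smul_apply, Module.End.mul_apply,
    lmul_pow, rmul_pow, Matrix.mul_assoc]

lemma commute_Lop_lmul (A : Matrix (Fin n) (Fin n) ℂ) (B : Matrix (Fin m) (Fin m) ℂ)
    (a : Fin (N + 1) → Fin (N + 1) → ℂ) : Commute (Lop A B a) (lmul B) := by
  apply Commute.sum_left
  intro j _
  apply Commute.sum_left
  intro k _
  exact ((((Commute.refl (lmul (n := n) B)).pow_left (j : ℕ)).mul_left
    (((commute_lmul_rmul B A).symm).pow_left (k : ℕ))).smul_left (a j k))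

lemma commute_Lop_rmul (A : Matrix (Fin n) (Fin n) ℂ) (B : Matrix (Fin m) (Fin m) ℂ)
    (a : Fin (N + 1) → Fin (N + 1) → ℂ) : Commute (Lop A B a) (rmul A) := by
  apply Commute.sum_left
  intro j _
  apply Commute.sum_left
  intro k _
  exact ((((commute_lmul_rmul B A)).pow_left (j : ℕ)).mul_left
    ((Commute.refl (rmul (m := m) A)).pow_left (k : ℕ))).smul_left (a j k)

lemma mem_spectrum_of_eigen {p : ℕ} (M : Matrix (Fin p) (Fin p) ℂ) {v : Fin p → ℂ} {μ : ℂ}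
    (hv : v ≠ 0) (h : M.mulVec v = μ • v) : μ ∈ spectrum ℂ M := by
  rw [← AlgEquiv.spectrum_eq (Matrix.toLinAlgEquiv' (R := ℂ) (n := Fin p)) M]
  rw [← Module.End.hasEigenvalue_iff_mem_spectrum]
  exact Module.End.hasEigenvalue_of_hasEigenvector
    ⟨Module.End.mem_eigenspace_iff.mpr (by simpa using h), hv⟩

lemma spectrum_transpose {p : ℕ} (M : Matrix (Fin p) (Fin p) ℂ) :
    spectrum ℂ Mᵀ = spectrum ℂ M := by
  ext z
  simp only [spectrum.mem_iff, Matrix.isUnit_iff_isUnit_det, not_iff_not]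
  have : (algebraMap ℂ (Matrix (Fin p) (Fin p) ℂ) z - Mᵀ) =
      (algebraMap ℂ (Matrix (Fin p) (Fin p) ℂ) z - M)ᵀ := by
    rw [Matrix.transpose_sub]
    congr 1
    simp [Matrix.algebraMap_eq_diagonal]
  rw [this, Matrix.det_transpose]

lemma Lop_injective (A : Matrix (Fin n) (Fin n) ℂ) (B : Matrix (Fin m) (Fin m) ℂ)
    (a : Fin (N + 1) → Fin (N + 1) → ℂ)
    (hP : ∀ lam ∈ spectrum ℂ B, ∀ mu ∈ spectrum ℂ A,
      ∑ j : Fin (N + 1), ∑ k : Fin (N + 1), a j k * lam ^ (j : ℕ) * mu ^ (k : ℕ) ≠ 0) :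
    Function.Injective (Lop A B a) := by
  set L := Lop A B a with hL
  set S := lmul (n := n) B with hS
  set T := rmul (m := m) A with hT
  rw [← LinearMap.ker_eq_bot]
  by_contra hker
  -- step 1: ker L is S-invariant, get eigenvalue λ of S on ker L
  have hSmap : ∀ x ∈ LinearMap.ker L, S x ∈ LinearMap.ker L := by
    intro x hx
    rw [LinearMap.mem_ker] at hx ⊢
    have : L (S x) = S (L x) := congrFun (congrArg DFunLike.coe (commute_Lop_lmul A B a)) x
    rw [this, hx, map_zero]
  haveI : Nontrivial (LinearMap.ker L) := Submodule.nontrivial_iff_ne_bot.mpr hker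
  obtain ⟨lam, hlam⟩ := Module.End.exists_eigenvalue (S.restrict hSmap)
  obtain ⟨x, hx⟩ := hlam.exists_hasEigenvector
  have hxV : S (x : Matrix (Fin m) (Fin n) ℂ) = lam • (x : Matrix (Fin m) (Fin n) ℂ) := by
    have := Module.End.mem_eigenspace_iff.mp hx.1
    calc S (x : Matrix (Fin m) (Fin n) ℂ) = ((S.restrict hSmap) x : Matrix (Fin m) (Fin n) ℂ) :=
          (LinearMap.restrict_coe_apply _ _ _).symm
      _ = lam • (x : Matrix (Fin m) (Fin n) ℂ) := by rw [this]; rfl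
  -- step 2: the joint space
  set E : Submodule ℂ (Matrix (Fin m) (Fin n) ℂ) :=
    LinearMap.ker L ⊓ LinearMap.ker (S - lam • (1 : Module.End ℂ (Matrix (Fin m) (Fin n) ℂ)))
    with hE
  have memE : ∀ z, z ∈ E ↔ L z = 0 ∧ S z = lam • z := by
    intro z
    simp only [hE, Submodule.mem_inf, LinearMap.mem_ker, LinearMap.sub_apply,
      LinearMap.smul_apply, Module.End.one_apply, sub_eq_zero]
  have hxE : (x : Matrix (Fin m) (Fin n) ℂ) ∈ E :=
    (memE _).mpr ⟨x.2, hxV⟩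
  have hxne : (x : Matrix (Fin m) (Fin n) ℂ) ≠ 0 := by
    simpa [Submodule.coe_eq_zero] using hx.2
  haveI : Nontrivial E :=
    Submodule.nontrivial_iff_ne_bot.mpr (Submodule.ne_bot_iff _|>.mpr ⟨_, hxE, hxne⟩)
  have hTmap : ∀ z ∈ E, T z ∈ E := by
    intro z hz
    obtain ⟨hz1, hz2⟩ := (memE z).mp hz
    refine (memE _).mpr ⟨?_, ?_⟩
    · have : L (T z) = T (L z) := congrFun (congrArg DFunLike.coe (commute_Lop_rmul A B a)) z
      rw [this, hz1, map_zero]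
    · have : S (T z) = T (S z) := congrFun (congrArg DFunLike.coe (commute_lmul_rmul B A)) z
      rw [this, hz2, _root_.map_smul]
  obtain ⟨mu, hmu⟩ := Module.End.exists_eigenvalue (T.restrict hTmap)
  obtain ⟨y, hy⟩ := hmu.exists_hasEigenvector
  set y0 : Matrix (Fin m) (Fin n) ℂ := (y : Matrix (Fin m) (Fin n) ℂ) with hy0
  have hy0ne : y0 ≠ 0 := by simpa [hy0, Submodule.coe_eq_zero] using hy.2
  have hyT : T y0 = mu • y0 := by
    have := Module.End.mem_eigenspace_iff.mp hy.1
    calc T y0 = ((T.restrict hTmap) y : Matrix (Fin m) (Fin n) ℂ) :=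
          (LinearMap.restrict_coe_apply _ _ _).symm
      _ = mu • y0 := by rw [this]; rfl
  obtain ⟨hyL, hyS⟩ := (memE y0).mp y.2
  -- step 3: eigen-relations for powers
  have hBy : B * y0 = lam • y0 := hyS
  have hyA : y0 * A = mu • y0 := hyT
  have hBpow : ∀ j : ℕ, B ^ j * y0 = lam ^ j • y0 := by
    intro j
    induction j with
    | zero => simp
    | succ j ih =>
        rw [pow_succ, Matrix.mul_assoc, hBy, Matrix.mul_smul, ih, smul_smul, ← pow_succ']
  have hApow : ∀ k : ℕ, y0 * A ^ k = mu ^ k • y0 := by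
    intro k
    induction k with
    | zero => simp
    | succ k ih =>
        rw [pow_succ', ← Matrix.mul_assoc, hyA, Matrix.smul_mul, ih, smul_smul, ← pow_succ']
  -- step 4: P(lam, mu) = 0
  have hLy : L y0 = (∑ j : Fin (N + 1), ∑ k : Fin (N + 1),
      a j k * lam ^ (j : ℕ) * mu ^ (k : ℕ)) • y0 := by
    rw [hL, Lop_apply]
    rw [Finset.sum_smul]
    refine Finset.sum_congr rfl fun j _ => ?_
    rw [Finset.sum_smul]
    refine Finset.sum_congr rfl fun k _ => ?_
    rw [hBpow, Matrix.smul_mul, hApow, smul_smul, smul_smul, mul_assoc]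
  have hPzero : (∑ j : Fin (N + 1), ∑ k : Fin (N + 1),
      a j k * lam ^ (j : ℕ) * mu ^ (k : ℕ)) = 0 := by
    rcases smul_eq_zero.mp (hLy ▸ hyL) with h | h
    · exact h
    · exact absurd h hy0ne
  -- step 5: lam ∈ spectrum B, mu ∈ spectrum A
  obtain ⟨p, q, hpq⟩ : ∃ p q, y0 p q ≠ 0 := by
    by_contra h
    push_neg at h
    exact hy0ne (by ext p q; simpa using h p q)
  have hlamB : lam ∈ spectrum ℂ B := by
    apply mem_spectrum_of_eigen B (v := fun i => y0 i q)
    · intro h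
      exact hpq (congrFun h p)
    · funext i
      have := congrFun (congrFun hBy i) q
      simpa [Matrix.mul_apply, Matrix.mulVec, dotProduct] using this
  have hmuA : mu ∈ spectrum ℂ A := by
    rw [← spectrum_transpose]
    apply mem_spectrum_of_eigen Aᵀ (v := fun j => y0 p j)
    · intro h
      exact hpq (congrFun h q)
    · rw [Matrix.mulVec_transpose]
      funext j
      have := congrFun (congrFun hyA p) j
      simpa [Matrix.mul_apply, Matrix.vecMul, dotProduct] using this
  exact hP lam hlamB mu hmuA hPzero

end KreinAux

open KreinAux in
/-- Krein's theorem on unique solvability of generalized Lyapunov equations: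
if `P(λ, μ) = ∑ aⱼₖ λʲ μᵏ` is nonzero for every eigenvalue `λ` of `B` and every
eigenvalue `μ` of `A`, then for every `Y` the equation `∑ aⱼₖ Bʲ H Aᵏ = Y`
has a unique solution `H`. -/
theorem krein_unique_solvability {m n N : ℕ}
    (A : Matrix (Fin n) (Fin n) ℂ) (B : Matrix (Fin m) (Fin m) ℂ)
    (a : Fin (N + 1) → Fin (N + 1) → ℂ)
    (hP : ∀ lam ∈ spectrum ℂ B, ∀ mu ∈ spectrum ℂ A,
      ∑ j : Fin (N + 1), ∑ k : Fin (N + 1), a j k * lam ^ (j : ℕ) * mu ^ (k : ℕ) ≠ 0) :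
    ∀ Y : Matrix (Fin m) (Fin n) ℂ,
      ∃! H : Matrix (Fin m) (Fin n) ℂ,
        ∑ j : Fin (N + 1), ∑ k : Fin (N + 1),
          a j k • (B ^ (j : ℕ) * H * A ^ (k : ℕ)) = Y := by
  intro Y
  have hinj := Lop_injective A B a hP
  have hsurj := LinearMap.injective_iff_surjective.mp hinj
  obtain ⟨H, hH⟩ := hsurj Y
  refine ⟨H, ?_, ?_⟩
  · show ∑ j : Fin (N + 1), ∑ k : Fin (N + 1),
        a j k • (B ^ (j : ℕ) * H * A ^ (k : ℕ)) = Y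
    rw [← Lop_apply]; exact hH
  · intro H' hH'
    apply hinj
    rw [Lop_apply, Lop_apply, hH']
    rw [← Lop_apply]; exact hH.symm
end

section
/- Let a > b > 0, let A be a complex n×n matrix whose spectrum belongs to E_i = {λ ∈ ℂ : (Re λ)²/a² + (Im λ)²/b² < 1}, and let H be a Hermitian positive definite matrix satisfying H − (1/(2a²) + 1/(2b²))·A*HA − (1/(4a²) − 1/(4b²))·(HA² + (A*)²H) = I. If B is a complex n×n matrix such that (1/(2a²) + 1/(2b²))·(B*HA + A*HB + B*HB) + (1/(4a²) − 1/(4b²))·(H(AB + BA + B²) + (AB + BA + B²)*H) < I (i.e., I minus this matrix is positive definite), then the spectrum of A + B also belongs to E_i. -/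
/-!
Write `C = A + B`. Given the equation for `H`, the hypothesis on `B` says exactly that `H` makes
the ellipse Lyapunov operator `H - c₁ CᴴHC - c₂ (HC² + Cᴴ²H)` of `C` positive definite, where
`c₁ = 1/(2a²) + 1/(2b²)` and `c₂ = 1/(4a²) - 1/(4b²)`. Evaluated at an eigenvector `v` of `C`
with eigenvalue `μ`, this operator's quadratic form is
`(1 - c₁|μ|² - c₂(μ² + μ̄²)) v*Hv = (1 - Re²μ/a² - Im²μ/b²) v*Hv`, and `v*Hv > 0`.
-/

open Matrix
open scoped ComplexOrder

theorem Matrix.exists_mulVec_eq_smul_of_mem_spectrum {K m : Type*} [Field K] [Fintype m]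
    [DecidableEq m] {C : Matrix m m K} {μ : K} (hμ : μ ∈ spectrum K C) :
    ∃ v ≠ 0, C *ᵥ v = μ • v := by
  rw [← spectrum_toLin', ← Module.End.hasEigenvalue_iff_mem_spectrum] at hμ
  obtain ⟨v, hv⟩ := hμ.exists_hasEigenvector
  exact ⟨v, hv.2, by simpa [toLin'_apply] using hv.apply_eq_smul⟩

section Eigenvector

variable {R m : Type*} [CommRing R] [StarRing R] [Fintype m]
  {C : Matrix m m R} {μ : R} {v : m → R}

theorem star_dotProduct_conjTranspose_mulVec (hv : C *ᵥ v = μ • v) (w : m → R) :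
    star v ⬝ᵥ (Cᴴ *ᵥ w) = star μ * (star v ⬝ᵥ w) := by
  rw [dotProduct_mulVec, ← star_mulVec, hv, star_smul, smul_dotProduct, smul_eq_mul]

theorem star_dotProduct_conjTranspose_mul_mul_mulVec (hv : C *ᵥ v = μ • v) (H : Matrix m m R) :
    star v ⬝ᵥ ((Cᴴ * H * C) *ᵥ v) = star μ * μ * (star v ⬝ᵥ (H *ᵥ v)) := by
  rw [← mulVec_mulVec, ← mulVec_mulVec, hv, mulVec_smul,
    star_dotProduct_conjTranspose_mulVec hv, dotProduct_smul, smul_eq_mul, mul_assoc]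

variable [DecidableEq m]

theorem star_dotProduct_mul_sq_mulVec (hv : C *ᵥ v = μ • v) (H : Matrix m m R) :
    star v ⬝ᵥ ((H * C ^ 2) *ᵥ v) = μ ^ 2 * (star v ⬝ᵥ (H *ᵥ v)) := by
  rw [sq, ← mulVec_mulVec, ← mulVec_mulVec, hv, mulVec_smul, hv, smul_smul, mulVec_smul,
    dotProduct_smul, smul_eq_mul, sq]

theorem star_dotProduct_conjTranspose_sq_mul_mulVec (hv : C *ᵥ v = μ • v) (H : Matrix m m R) :
    star v ⬝ᵥ ((Cᴴ ^ 2 * H) *ᵥ v) = star μ ^ 2 * (star v ⬝ᵥ (H *ᵥ v)) := by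
  rw [sq, ← mulVec_mulVec, ← mulVec_mulVec, star_dotProduct_conjTranspose_mulVec hv,
    star_dotProduct_conjTranspose_mulVec hv, ← mul_assoc, sq]

end Eigenvector

theorem one_sub_ellipse_coeffs_eq (a b : ℝ) (μ : ℂ) :
    1 - ((1 / (2 * a ^ 2) + 1 / (2 * b ^ 2) : ℝ) : ℂ) * (star μ * μ)
      - ((1 / (4 * a ^ 2) - 1 / (4 * b ^ 2) : ℝ) : ℂ) * (μ ^ 2 + star μ ^ 2)
      = ((1 - (μ.re ^ 2 / a ^ 2 + μ.im ^ 2 / b ^ 2) : ℝ) : ℂ) := by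
  have hnorm : star μ * μ = ((μ.re ^ 2 + μ.im ^ 2 : ℝ) : ℂ) := by
    rw [mul_comm, Complex.star_def, Complex.mul_conj, Complex.normSq_apply]
    push_cast
    ring
  have hsq : μ ^ 2 + star μ ^ 2 = ((2 * (μ.re ^ 2 - μ.im ^ 2) : ℝ) : ℂ) := by
    rw [Complex.star_def, ← map_pow, Complex.add_conj, sq, Complex.mul_re]
    push_cast
    ring
  rw [hnorm, hsq]
  push_cast
  ring

section EllipseLyapunov

variable {m : Type*} [Fintype m] [DecidableEq m]

noncomputable def ellipseLyapunov (a b : ℝ) (C H : Matrix m m ℂ) : Matrix m m ℂ :=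
  H - ((1 / (2 * a ^ 2) + 1 / (2 * b ^ 2) : ℝ) : ℂ) • (Cᴴ * H * C)
    - ((1 / (4 * a ^ 2) - 1 / (4 * b ^ 2) : ℝ) : ℂ) • (H * C ^ 2 + Cᴴ ^ 2 * H)

theorem ellipseLyapunov_add (a b : ℝ) (A B H : Matrix m m ℂ) :
    ellipseLyapunov a b (A + B) H = ellipseLyapunov a b A H
      - (((1 / (2 * a ^ 2) + 1 / (2 * b ^ 2) : ℝ) : ℂ) • (Bᴴ * H * A + Aᴴ * H * B + Bᴴ * H * B)
        + ((1 / (4 * a ^ 2) - 1 / (4 * b ^ 2) : ℝ) : ℂ) •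
          (H * (A * B + B * A + B ^ 2) + (A * B + B * A + B ^ 2)ᴴ * H)) := by
  simp only [ellipseLyapunov, conjTranspose_add, conjTranspose_mul, sq, mul_add, add_mul,
    smul_add]
  module

theorem star_dotProduct_ellipseLyapunov_mulVec (a b : ℝ) {C : Matrix m m ℂ} {μ : ℂ}
    {v : m → ℂ} (hv : C *ᵥ v = μ • v) (H : Matrix m m ℂ) :
    star v ⬝ᵥ (ellipseLyapunov a b C H *ᵥ v)
      = ((1 - (μ.re ^ 2 / a ^ 2 + μ.im ^ 2 / b ^ 2) : ℝ) : ℂ) * (star v ⬝ᵥ (H *ᵥ v)) := by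
  rw [ellipseLyapunov, sub_mulVec, sub_mulVec, smul_mulVec, smul_mulVec, add_mulVec,
    dotProduct_sub, dotProduct_sub, dotProduct_smul, dotProduct_smul, dotProduct_add,
    star_dotProduct_conjTranspose_mul_mul_mulVec hv, star_dotProduct_mul_sq_mulVec hv,
    star_dotProduct_conjTranspose_sq_mul_mulVec hv, ← one_sub_ellipse_coeffs_eq, smul_eq_mul,
    smul_eq_mul]
  ring

theorem ellipse_lt_one_of_mem_spectrum_of_posDef_ellipseLyapunov (a b : ℝ)
    {C H : Matrix m m ℂ} (hH : H.PosDef) (hL : (ellipseLyapunov a b C H).PosDef) {μ : ℂ}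
    (hμ : μ ∈ spectrum ℂ C) : μ.re ^ 2 / a ^ 2 + μ.im ^ 2 / b ^ 2 < 1 := by
  obtain ⟨v, hv0, hv⟩ := exists_mulVec_eq_smul_of_mem_spectrum hμ
  have hform := hL.dotProduct_mulVec_pos hv0
  rw [star_dotProduct_ellipseLyapunov_mulVec a b hv] at hform
  have hpos := (pos_iff_pos_of_mul_pos hform).mpr (hH.dotProduct_mulVec_pos hv0)
  exact sub_pos.mp (Complex.zero_lt_real.mp hpos)

end EllipseLyapunov

theorem spectrum_perturbed_in_ellipse_general {n : ℕ} (a b : ℝ)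
    (A : Matrix (Fin n) (Fin n) ℂ)
    (H : Matrix (Fin n) (Fin n) ℂ) (hH : H.PosDef)
    (heq : H - ((1 / (2 * a ^ 2) + 1 / (2 * b ^ 2) : ℝ) : ℂ) • (Aᴴ * H * A)
      - ((1 / (4 * a ^ 2) - 1 / (4 * b ^ 2) : ℝ) : ℂ) • (H * A ^ 2 + Aᴴ ^ 2 * H) = 1)
    (B : Matrix (Fin n) (Fin n) ℂ)
    (hB : (1 - (((1 / (2 * a ^ 2) + 1 / (2 * b ^ 2) : ℝ) : ℂ) • (Bᴴ * H * A + Aᴴ * H * B + Bᴴ * H * B)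
      + ((1 / (4 * a ^ 2) - 1 / (4 * b ^ 2) : ℝ) : ℂ) •
        (H * (A * B + B * A + B ^ 2) + (A * B + B * A + B ^ 2)ᴴ * H))).PosDef) :
    ∀ μ ∈ spectrum ℂ (A + B), μ.re ^ 2 / a ^ 2 + μ.im ^ 2 / b ^ 2 < 1 := by
  have hLA : ellipseLyapunov a b A H = 1 := heq
  have hL : (ellipseLyapunov a b (A + B) H).PosDef := by
    rwa [ellipseLyapunov_add, hLA]
  exact fun μ hμ => ellipse_lt_one_of_mem_spectrum_of_posDef_ellipseLyapunov a b hH hL hμ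

/-- Perturbation theorem for the interior of the ellipse: if the spectrum of `A`
lies in `E_i`, `H > 0` solves the elliptic Lyapunov-type equation with right-hand
side `I`, and the perturbation `B` satisfies the matrix inequality (9), then the
spectrum of `A + B` also lies in `E_i`. -/
theorem spectrum_perturbed_in_ellipse {n : ℕ} (a b : ℝ) (hba : b < a) (hb : 0 < b)
    (A : Matrix (Fin n) (Fin n) ℂ)
    (hA : ∀ μ ∈ spectrum ℂ A, μ.re ^ 2 / a ^ 2 + μ.im ^ 2 / b ^ 2 < 1)
    (H : Matrix (Fin n) (Fin n) ℂ) (hH : H.PosDef)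
    (heq : H - ((1 / (2 * a ^ 2) + 1 / (2 * b ^ 2) : ℝ) : ℂ) • (Aᴴ * H * A)
      - ((1 / (4 * a ^ 2) - 1 / (4 * b ^ 2) : ℝ) : ℂ) • (H * A ^ 2 + Aᴴ ^ 2 * H) = 1)
    (B : Matrix (Fin n) (Fin n) ℂ)
    (hB : (1 - (((1 / (2 * a ^ 2) + 1 / (2 * b ^ 2) : ℝ) : ℂ) • (Bᴴ * H * A + Aᴴ * H * B + Bᴴ * H * B)
      + ((1 / (4 * a ^ 2) - 1 / (4 * b ^ 2) : ℝ) : ℂ) •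
        (H * (A * B + B * A + B ^ 2) + (A * B + B * A + B ^ 2)ᴴ * H))).PosDef) :
    ∀ μ ∈ spectrum ℂ (A + B), μ.re ^ 2 / a ^ 2 + μ.im ^ 2 / b ^ 2 < 1 :=
  spectrum_perturbed_in_ellipse_general a b A H hH heq B hB
end

section
/- Let a > b > 0, let A be a complex n×n matrix whose spectrum belongs to E_i = {λ ∈ ℂ : (Re λ)²/a² + (Im λ)²/b² < 1}, and let H be a Hermitian positive definite matrix satisfying H − (1/(2a²) + 1/(2b²))·A*HA − (1/(4a²) − 1/(4b²))·(HA² + (A*)²H) = I. If B is a complex n×n matrix with ‖B‖ < √(‖A‖² + b²/‖H‖) − ‖A‖, where ‖·‖ is the operator norm, then the spectrum of A + B also belongs to E_i. -/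
set_option maxHeartbeats 1000000


open Matrix
open scoped ComplexOrder Matrix.Norms.L2Operator

/-- Norm-perturbation corollary for the interior of the ellipse: if the spectrum of
`A` lies in `E_i`, `H > 0` solves the elliptic Lyapunov-type equation with right-hand
side `I`, and `‖B‖ < √(‖A‖² + b²/‖H‖) − ‖A‖` (operator norm), then the spectrum of
`A + B` also lies in `E_i`. -/
theorem spectrum_perturbed_in_ellipse_norm {n : ℕ} (a b : ℝ) (hba : b < a) (hb : 0 < b)
    (A : Matrix (Fin n) (Fin n) ℂ)
    (hA : ∀ μ ∈ spectrum ℂ A, μ.re ^ 2 / a ^ 2 + μ.im ^ 2 / b ^ 2 < 1)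
    (H : Matrix (Fin n) (Fin n) ℂ) (hH : H.PosDef)
    (heq : H - ((1 / (2 * a ^ 2) + 1 / (2 * b ^ 2) : ℝ) : ℂ) • (Aᴴ * H * A)
      - ((1 / (4 * a ^ 2) - 1 / (4 * b ^ 2) : ℝ) : ℂ) • (H * A ^ 2 + Aᴴ ^ 2 * H) = 1)
    (B : Matrix (Fin n) (Fin n) ℂ)
    (hB : ‖B‖ < Real.sqrt (‖A‖ ^ 2 + b ^ 2 / ‖H‖) - ‖A‖) :
    ∀ μ ∈ spectrum ℂ (A + B), μ.re ^ 2 / a ^ 2 + μ.im ^ 2 / b ^ 2 < 1 := by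
  intro μ hμ
  have ha : (0:ℝ) < a := hb.trans hba
  set c1 : ℝ := 1 / (2 * a ^ 2) + 1 / (2 * b ^ 2) with hc1
  set c2 : ℝ := 1 / (4 * a ^ 2) - 1 / (4 * b ^ 2) with hc2
  have hc1pos : 0 < c1 := by rw [hc1]; positivity
  have hc2neg : c2 < 0 := by
    rw [hc2]
    have : (4:ℝ) * b ^ 2 < 4 * a ^ 2 := by nlinarith
    have h1 : 1 / (4 * a ^ 2) < 1 / (4 * b ^ 2) :=
      one_div_lt_one_div_of_lt (by positivity) this
    linarith
  set C := A + B with hC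
  -- extract an eigenvector
  rw [spectrum.mem_iff, Matrix.isUnit_iff_isUnit_det, isUnit_iff_ne_zero, not_not] at hμ
  obtain ⟨v, hv0, hv'⟩ := (Matrix.exists_mulVec_eq_zero_iff).mpr hμ
  rw [Matrix.sub_mulVec, sub_eq_zero, Algebra.algebraMap_eq_smul_one,
    Matrix.smul_mulVec, Matrix.one_mulVec] at hv'
  have hv : C *ᵥ v = μ • v := hv'.symm
  -- Euclidean-space embedding and sesquilinear form
  set e : (Fin n → ℂ) → EuclideanSpace ℂ (Fin n) := fun x => (WithLp.equiv 2 (Fin n → ℂ)).symm x with he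
  set g : (Fin n → ℂ) → (Fin n → ℂ) → ℂ := fun x y => star x ⬝ᵥ (H *ᵥ y) with hg
  set α := ‖A‖ with hα
  set β := ‖B‖ with hβ
  set N := ‖e v‖ with hNdef
  have hα0 : 0 ≤ α := norm_nonneg _
  have hβ0 : 0 ≤ β := norm_nonneg _
  have hgb : ∀ x y, ‖g x y‖ ≤ ‖H‖ * ‖e x‖ * ‖e y‖ := by
    intro x y
    rw [hg]
    show ‖star x ⬝ᵥ (H *ᵥ y)‖ ≤ _
    rw [show star x ⬝ᵥ (H *ᵥ y) = (inner ℂ ((WithLp.equiv 2 (Fin n → ℂ)).symm x)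
        ((WithLp.equiv 2 (Fin n → ℂ)).symm (H *ᵥ y)) : ℂ) from by rw [dotProduct_comm]; rfl]
    calc ‖(inner ℂ ((WithLp.equiv 2 (Fin n → ℂ)).symm x)
            ((WithLp.equiv 2 (Fin n → ℂ)).symm (H *ᵥ y)) : ℂ)‖
        ≤ ‖(WithLp.equiv 2 (Fin n → ℂ)).symm x‖ *
            ‖(WithLp.equiv 2 (Fin n → ℂ)).symm (H *ᵥ y)‖ := norm_inner_le_norm _ _
      _ ≤ ‖(WithLp.equiv 2 (Fin n → ℂ)).symm x‖ *
            (‖H‖ * ‖(WithLp.equiv 2 (Fin n → ℂ)).symm y‖) :=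
          mul_le_mul_of_nonneg_left
            (H.l2_opNorm_mulVec ((WithLp.equiv 2 (Fin n → ℂ)).symm y)) (norm_nonneg _)
      _ = _ := by ring
  have hmulN : ∀ (M : Matrix (Fin n) (Fin n) ℂ) x, ‖e (M *ᵥ x)‖ ≤ ‖M‖ * ‖e x‖ :=
    fun M x => M.l2_opNorm_mulVec ((WithLp.equiv 2 (Fin n → ℂ)).symm x)
  have hN : 0 < N := by
    rw [hNdef, norm_pos_iff]
    exact fun h => hv0 (congrArg (WithLp.equiv 2 (Fin n → ℂ)) h)
  have hre : 0 < (g v v).re := by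
    have := hH.re_dotProduct_pos hv0
    simpa [hg, RCLike.re_to_complex] using this
  have hH0 : 0 < ‖H‖ := by
    rcases eq_or_ne H 0 with h | h
    · exfalso; rw [hg] at hre; simp [h] at hre
    · exact norm_pos_iff.mpr h
  -- key numeric inequality from hB
  have hkey : ‖H‖ * (β * (2 * α + β)) < b ^ 2 := by
    have h1 : β + α < Real.sqrt (α ^ 2 + b ^ 2 / ‖H‖) := by linarith
    have h2 : (β + α) ^ 2 < α ^ 2 + b ^ 2 / ‖H‖ :=
      (Real.lt_sqrt (by positivity)).mp h1
    have h3 : β * (2 * α + β) < b ^ 2 / ‖H‖ := by nlinarith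
    calc ‖H‖ * (β * (2 * α + β)) < ‖H‖ * (b ^ 2 / ‖H‖) :=
          (mul_lt_mul_iff_right₀ hH0).mpr h3
      _ = b ^ 2 := by field_simp
  -- the scalar Lyapunov identity
  set u := A *ᵥ v with huu
  set w := B *ᵥ v with hww
  set q := A ^ 2 *ᵥ v with hq
  set z := (A ^ 2 - C ^ 2) *ᵥ v with hz
  have hNsq : star v ⬝ᵥ v = ((N : ℝ) : ℂ) ^ 2 := by
    rw [show star v ⬝ᵥ v = (inner ℂ (e v) (e v) : ℂ) from by rw [dotProduct_comm]; rfl,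
      inner_self_eq_norm_sq_to_K]
    norm_num [hNdef, he]
  have main : g v v - (c1 : ℂ) * g u u - (c2 : ℂ) * (g v q + g q v) = ((N : ℝ) : ℂ) ^ 2 := by
    have main0 := congrArg (fun M : Matrix (Fin n) (Fin n) ℂ => star v ⬝ᵥ (M *ᵥ v)) heq
    simp only [Matrix.sub_mulVec, Matrix.add_mulVec, Matrix.smul_mulVec,
      Matrix.one_mulVec, dotProduct_sub, dotProduct_add, dotProduct_smul, smul_eq_mul] at main0
    rw [← hNsq]
    have e2 : star v ⬝ᵥ ((Aᴴ * H * A) *ᵥ v) = g u u := by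
      rw [← Matrix.mulVec_mulVec, ← Matrix.mulVec_mulVec, Matrix.dotProduct_mulVec,
        ← Matrix.star_mulVec, hg]
    have e3 : star v ⬝ᵥ ((H * A ^ 2) *ᵥ v) = g v q := by
      rw [← Matrix.mulVec_mulVec, hg]
    have e4 : star v ⬝ᵥ ((Aᴴ ^ 2 * H) *ᵥ v) = g q v := by
      rw [← Matrix.mulVec_mulVec, ← Matrix.conjTranspose_pow, Matrix.dotProduct_mulVec,
        ← Matrix.star_mulVec, hg]
    rw [e2, e3, e4] at main0
    convert main0 using 2
  -- expansion identities
  have husum : μ • v = u + w := by rw [← hv, hC, Matrix.add_mulVec]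
  have h1 : g (μ • v) (μ • v) = (starRingEnd ℂ μ) * μ * g v v := by
    simp [hg, star_smul, Matrix.mulVec_smul, smul_dotProduct, dotProduct_smul, smul_eq_mul]
    ring
  have hC2v : C ^ 2 *ᵥ v = μ • μ • v := by
    rw [pow_two, ← Matrix.mulVec_mulVec, hv, Matrix.mulVec_smul, hv]
  have h2 : g v (C ^ 2 *ᵥ v) = μ ^ 2 * g v v := by
    rw [hC2v]
    simp [hg, Matrix.mulVec_smul, dotProduct_smul, smul_eq_mul]
    ring
  have h3 : g (C ^ 2 *ᵥ v) v = (starRingEnd ℂ μ) ^ 2 * g v v := by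
    rw [hC2v]
    simp [hg, star_smul, smul_dotProduct, smul_eq_mul]
    ring
  have h4 : g w u + g (μ • v) w = g (μ • v) (μ • v) - g u u := by
    rw [husum]
    simp [hg, star_add, Matrix.mulVec_add, add_dotProduct, dotProduct_add]
    ring
  have h5 : g v z = g v q - g v (C ^ 2 *ᵥ v) := by
    simp [hg, hz, hq, Matrix.sub_mulVec, Matrix.mulVec_sub, dotProduct_sub]
  have h6 : g z v = g q v - g (C ^ 2 *ᵥ v) v := by
    simp [hg, hz, hq, Matrix.sub_mulVec, star_sub, sub_dotProduct]
  set Eerr : ℂ := -(c1 : ℂ) * (g w u + g (μ • v) w) + (c2 : ℂ) * (g v z + g z v) with hEe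
  have stepA : g v v * (1 - (c1 : ℂ) * ((starRingEnd ℂ μ) * μ)
      - (c2 : ℂ) * (μ ^ 2 + (starRingEnd ℂ μ) ^ 2)) = ((N : ℝ) : ℂ) ^ 2 + Eerr := by
    rw [hEe]
    linear_combination main + (c1 : ℂ) * h4 + (c1 : ℂ) * h1 - (c2 : ℂ) * h5 - (c2 : ℂ) * h6
      + (c2 : ℂ) * h2 + (c2 : ℂ) * h3
  have hcoef : (1 : ℂ) - (c1 : ℂ) * ((starRingEnd ℂ μ) * μ)
      - (c2 : ℂ) * (μ ^ 2 + (starRingEnd ℂ μ) ^ 2)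
      = ((1 - (μ.re ^ 2 / a ^ 2 + μ.im ^ 2 / b ^ 2) : ℝ) : ℂ) := by
    have haC : ((a : ℝ) : ℂ) ≠ 0 := Complex.ofReal_ne_zero.mpr (ne_of_gt ha)
    have hbC : ((b : ℝ) : ℂ) ≠ 0 := Complex.ofReal_ne_zero.mpr (ne_of_gt hb)
    have hμ2 : (starRingEnd ℂ μ) * μ = ((μ.re ^ 2 + μ.im ^ 2 : ℝ) : ℂ) := by
      rw [mul_comm, Complex.mul_conj]
      norm_num [Complex.normSq_apply]
      ring
    have hμ3 : μ ^ 2 + (starRingEnd ℂ μ) ^ 2 = ((2 * (μ.re ^ 2 - μ.im ^ 2) : ℝ) : ℂ) := by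
      apply Complex.ext <;>
        simp [Complex.mul_re, Complex.mul_im, pow_two] <;> ring
    rw [hμ2, hμ3, hc1, hc2]
    push_cast
    field_simp
    ring
  set T : ℝ := 1 - (μ.re ^ 2 / a ^ 2 + μ.im ^ 2 / b ^ 2) with hT
  have stepA' : g v v * ((T : ℝ) : ℂ) = ((N : ℝ) : ℂ) ^ 2 + Eerr := by
    rw [← hcoef]; exact stepA
  have hrepart : (g v v).re * T = N ^ 2 + Eerr.re := by
    have := congrArg Complex.re stepA'
    simpa [Complex.mul_re, Complex.ofReal_re, Complex.ofReal_im, Complex.add_re,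
      pow_two, Complex.mul_im] using this
  -- bound the error
  have hwN : ‖e w‖ ≤ β * N := hmulN B v
  have huN : ‖e u‖ ≤ α * N := hmulN A v
  have hCle : ‖C‖ ≤ α + β := norm_add_le A B
  have hμvN : ‖e (μ • v)‖ ≤ (α + β) * N := by
    rw [← hv]
    calc ‖e (C *ᵥ v)‖ ≤ ‖C‖ * N := hmulN C v
      _ ≤ (α + β) * N := mul_le_mul_of_nonneg_right hCle (le_of_lt hN)
  have hzMat : ‖A ^ 2 - C ^ 2‖ ≤ β * (2 * α + β) := by
    have hid : A ^ 2 - C ^ 2 = -(C * B + B * A) := by rw [hC]; noncomm_ring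
    rw [hid, norm_neg]
    calc ‖C * B + B * A‖ ≤ ‖C * B‖ + ‖B * A‖ := norm_add_le _ _
      _ ≤ ‖C‖ * β + β * α := add_le_add (norm_mul_le _ _) (norm_mul_le _ _)
      _ ≤ (α + β) * β + β * α := by nlinarith
      _ = β * (2 * α + β) := by ring
  have hzN : ‖e z‖ ≤ β * (2 * α + β) * N := by
    calc ‖e z‖ ≤ ‖A ^ 2 - C ^ 2‖ * N := hmulN _ v
      _ ≤ β * (2 * α + β) * N := mul_le_mul_of_nonneg_right hzMat (le_of_lt hN)
  have hEbound : ‖Eerr‖ ≤ ‖H‖ * (β * (2 * α + β)) * N ^ 2 / b ^ 2 := by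
    have b1 : ‖g w u‖ ≤ ‖H‖ * (β * N) * (α * N) := by
      calc ‖g w u‖ ≤ ‖H‖ * ‖e w‖ * ‖e u‖ := hgb w u
        _ ≤ ‖H‖ * (β * N) * (α * N) := by
            apply mul_le_mul
            · exact mul_le_mul_of_nonneg_left hwN (le_of_lt hH0)
            · exact huN
            · exact norm_nonneg _
            · exact mul_nonneg (norm_nonneg _) (mul_nonneg hβ0 hN.le)
    have b2 : ‖g (μ • v) w‖ ≤ ‖H‖ * ((α + β) * N) * (β * N) := by
      calc ‖g (μ • v) w‖ ≤ ‖H‖ * ‖e (μ • v)‖ * ‖e w‖ := hgb _ _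
        _ ≤ ‖H‖ * ((α + β) * N) * (β * N) := by
            apply mul_le_mul
            · exact mul_le_mul_of_nonneg_left hμvN (le_of_lt hH0)
            · exact hwN
            · exact norm_nonneg _
            · exact mul_nonneg (norm_nonneg _) (mul_nonneg (by linarith) hN.le)
    have b3 : ‖g v z‖ ≤ ‖H‖ * N * (β * (2 * α + β) * N) := by
      calc ‖g v z‖ ≤ ‖H‖ * ‖e v‖ * ‖e z‖ := hgb _ _
        _ ≤ ‖H‖ * N * (β * (2 * α + β) * N) := by
            apply mul_le_mul
            · exact le_of_eq rfl
            · exact hzN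
            · exact norm_nonneg _
            · exact mul_nonneg (norm_nonneg _) hN.le
    have b4 : ‖g z v‖ ≤ ‖H‖ * (β * (2 * α + β) * N) * N := by
      calc ‖g z v‖ ≤ ‖H‖ * ‖e z‖ * ‖e v‖ := hgb _ _
        _ ≤ ‖H‖ * (β * (2 * α + β) * N) * N := by
            apply mul_le_mul
            · exact mul_le_mul_of_nonneg_left hzN (le_of_lt hH0)
            · exact le_of_eq rfl
            · exact norm_nonneg _
            · exact mul_nonneg (norm_nonneg _) (mul_nonneg (mul_nonneg hβ0 (by linarith)) hN.le)
    have hnc1 : ‖(-(c1 : ℂ))‖ = c1 := by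
      rw [norm_neg, Complex.norm_real, Real.norm_eq_abs, abs_of_pos hc1pos]
    have hnc2 : ‖((c2 : ℝ) : ℂ)‖ = -c2 := by
      rw [Complex.norm_real, Real.norm_eq_abs, abs_of_neg hc2neg]
    have step : ‖Eerr‖ ≤ c1 * (‖g w u‖ + ‖g (μ • v) w‖) + (-c2) * (‖g v z‖ + ‖g z v‖) := by
      rw [hEe]
      calc ‖-(c1 : ℂ) * (g w u + g (μ • v) w) + (c2 : ℂ) * (g v z + g z v)‖
          ≤ ‖-(c1 : ℂ) * (g w u + g (μ • v) w)‖ + ‖(c2 : ℂ) * (g v z + g z v)‖ :=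
            norm_add_le _ _
        _ = c1 * ‖g w u + g (μ • v) w‖ + (-c2) * ‖g v z + g z v‖ := by
            rw [norm_mul, norm_mul, hnc1, hnc2]
        _ ≤ c1 * (‖g w u‖ + ‖g (μ • v) w‖) + (-c2) * (‖g v z‖ + ‖g z v‖) := by
            apply add_le_add
            · exact mul_le_mul_of_nonneg_left (norm_add_le _ _) (le_of_lt hc1pos)
            · exact mul_le_mul_of_nonneg_left (norm_add_le _ _) (by linarith)
    have hc12 : c1 - 2 * c2 = 1 / b ^ 2 := by
      rw [hc1, hc2]; field_simp; ring
    calc ‖Eerr‖ ≤ c1 * (‖g w u‖ + ‖g (μ • v) w‖) + (-c2) * (‖g v z‖ + ‖g z v‖) := step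
      _ ≤ c1 * (‖H‖ * (β * N) * (α * N) + ‖H‖ * ((α + β) * N) * (β * N))
          + (-c2) * (‖H‖ * N * (β * (2 * α + β) * N) + ‖H‖ * (β * (2 * α + β) * N) * N) := by
          apply add_le_add
          · exact mul_le_mul_of_nonneg_left (add_le_add b1 b2) (le_of_lt hc1pos)
          · exact mul_le_mul_of_nonneg_left (add_le_add b3 b4) (by linarith)
      _ = (c1 - 2 * c2) * (‖H‖ * (β * (2 * α + β)) * N ^ 2) := by ring
      _ = ‖H‖ * (β * (2 * α + β)) * N ^ 2 / b ^ 2 := by rw [hc12]; ring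
  -- conclude
  have hre_err : -(N ^ 2) < Eerr.re := by
    have h1 : |Eerr.re| ≤ ‖Eerr‖ := Complex.abs_re_le_norm Eerr
    have h2 : ‖H‖ * (β * (2 * α + β)) * N ^ 2 / b ^ 2 < N ^ 2 := by
      rw [div_lt_iff₀ (by positivity)]
      nlinarith [mul_lt_mul_of_pos_right hkey (pow_pos hN 2)]
    have h3 : -Eerr.re ≤ |Eerr.re| := neg_le_abs _
    linarith
  have hTpos : 0 < (g v v).re * T := by rw [hrepart]; linarith
  have : 0 < T := by
    by_contra h
    push_neg at h
    have : (g v v).re * T ≤ 0 := mul_nonpos_of_nonneg_of_nonpos (le_of_lt hre) h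
    linarith
  rw [hT] at this
  linarith
end

section
/- Let a > b > 0, let A be a complex n×n matrix whose spectrum belongs to E_e = {λ ∈ ℂ : (Re λ)²/a² + (Im λ)²/b² > 1}, and let H be a Hermitian positive definite matrix satisfying H − (1/(2a²) + 1/(2b²))·A*HA − (1/(4a²) − 1/(4b²))·(HA² + (A*)²H) = −I. If B is a complex n×n matrix such that −I < (1/(2a²) + 1/(2b²))·(B*HA + A*HB + B*HB) + (1/(4a²) − 1/(4b²))·(H(AB + BA + B²) + (AB + BA + B²)*H) (i.e., this matrix plus I is positive definite), then the spectrum of A + B also belongs to E_e. -/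
/-!
For an eigenpair `A v = μ v`, the quadratic form of `L(H, A) = H - α AᴴHA - β (HA² + Aᴴ²H)` at `v`
is `(1 - α |μ|² - 2β ((Re μ)² - (Im μ)²)) · v*Hv`. With `α = 1/(2a²) + 1/(2b²)` and
`β = 1/(4a²) - 1/(4b²)` the scalar factor is `1 - (Re μ)²/a² - (Im μ)²/b²`. Expanding
`L(H, A + B)` and using the equation for `H` shows that `-L(H, A + B)` is the positive definite
matrix of the hypothesis on `B`; since `v*Hv > 0`, the factor is negative at every eigenvalue of
`A + B`.
-/

open Matrix
open scoped ComplexOrder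

namespace Matrix

variable {n : Type*} [Fintype n] [DecidableEq n]

def ellipticLyapunov (α β : ℝ) (H A : Matrix n n ℂ) : Matrix n n ℂ :=
  H - (α : ℂ) • (Aᴴ * H * A) - (β : ℂ) • (H * A ^ 2 + Aᴴ ^ 2 * H)

theorem ellipticLyapunov_add (α β : ℝ) (H A B : Matrix n n ℂ) :
    ellipticLyapunov α β H (A + B) = ellipticLyapunov α β H A
      - ((α : ℂ) • (Bᴴ * H * A + Aᴴ * H * B + Bᴴ * H * B)
        + (β : ℂ) • (H * (A * B + B * A + B ^ 2) + (A * B + B * A + B ^ 2)ᴴ * H)) := by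
  simp only [ellipticLyapunov, sq, conjTranspose_add, conjTranspose_mul]
  simp only [mul_add, add_mul, smul_add, mul_assoc]
  abel

theorem exists_mulVec_eq_smul_of_mem_spectrum_s7 {K : Type*} [Field K]
    {A : Matrix n n K} {μ : K} (hμ : μ ∈ spectrum K A) : ∃ v ≠ 0, A *ᵥ v = μ • v := by
  rw [← spectrum_toLin', ← Module.End.hasEigenvalue_iff_mem_spectrum] at hμ
  obtain ⟨v, hv⟩ := hμ.exists_hasEigenvector
  exact ⟨v, hv.2, by simpa using hv.apply_eq_smul⟩

omit [DecidableEq n] in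
theorem star_dotProduct_conjTranspose_mul_mul_mulVec {R : Type*} [CommRing R] [StarRing R]
    (v : n → R) (C H D : Matrix n n R) :
    star v ⬝ᵥ (Cᴴ * H * D) *ᵥ v = star (C *ᵥ v) ⬝ᵥ H *ᵥ (D *ᵥ v) := by
  rw [← mulVec_mulVec, ← mulVec_mulVec, dotProduct_mulVec, star_mulVec, dotProduct_mulVec]

theorem star_dotProduct_ellipticLyapunov_mulVec_of_mulVec_eq_smul (α β : ℝ) (H : Matrix n n ℂ)
    {A : Matrix n n ℂ} {v : n → ℂ} {μ : ℂ} (hv : A *ᵥ v = μ • v) :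
    star v ⬝ᵥ ellipticLyapunov α β H A *ᵥ v
      = ((1 - α * (μ.re ^ 2 + μ.im ^ 2) - 2 * β * (μ.re ^ 2 - μ.im ^ 2) : ℝ) : ℂ)
        * (star v ⬝ᵥ H *ᵥ v) := by
  have hv2 : (A ^ 2) *ᵥ v = μ ^ 2 • v := by
    rw [sq, ← mulVec_mulVec, hv, mulVec_smul, hv, smul_smul, sq]
  have h1 := star_dotProduct_conjTranspose_mul_mul_mulVec v A H A
  have h2 := star_dotProduct_conjTranspose_mul_mul_mulVec v 1 H (A ^ 2)
  have h3 := star_dotProduct_conjTranspose_mul_mul_mulVec v (A ^ 2) H 1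
  simp only [conjTranspose_one, one_mul, mul_one, one_mulVec, conjTranspose_pow] at h1 h2 h3
  simp only [ellipticLyapunov, sub_mulVec, add_mulVec, smul_mulVec, dotProduct_sub, dotProduct_add,
    dotProduct_smul, h1, h2, h3, hv, hv2, mulVec_smul, dotProduct_smul, star_smul, smul_dotProduct,
    smul_eq_mul]
  set q := star v ⬝ᵥ H *ᵥ v
  have hμ : star μ * μ = ((μ.re ^ 2 + μ.im ^ 2 : ℝ) : ℂ) := by
    rw [Complex.star_def, ← Complex.normSq_eq_conj_mul_self, Complex.normSq_apply, sq, sq]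
  have hμ2 : μ ^ 2 + star (μ ^ 2) = ((2 * (μ.re ^ 2 - μ.im ^ 2) : ℝ) : ℂ) := by
    apply Complex.ext <;> simp [sq] <;> ring
  push_cast at hμ hμ2 ⊢
  linear_combination (-(α : ℂ) * q) * hμ - (β * q) * hμ2

theorem one_lt_of_mem_spectrum_of_posDef_neg_ellipticLyapunov {α β : ℝ} {H A : Matrix n n ℂ}
    (hH : H.PosDef) (hL : (-ellipticLyapunov α β H A).PosDef) {μ : ℂ} (hμ : μ ∈ spectrum ℂ A) :
    1 < α * (μ.re ^ 2 + μ.im ^ 2) + 2 * β * (μ.re ^ 2 - μ.im ^ 2) := by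
  obtain ⟨v, hv0, hv⟩ := exists_mulVec_eq_smul_of_mem_spectrum_s7 hμ
  have hq := hH.dotProduct_mulVec_pos hv0
  have hneg := hL.dotProduct_mulVec_pos hv0
  rw [neg_mulVec, dotProduct_neg, star_dotProduct_ellipticLyapunov_mulVec_of_mulVec_eq_smul _ _ _ hv,
    neg_pos] at hneg
  have hr := (Complex.neg_iff.mp hneg).1
  rw [Complex.re_ofReal_mul] at hr
  have := neg_of_mul_neg_left hr (Complex.pos_iff.mp hq).1.le
  linarith

end Matrix

theorem ellipse_equation_of_lyapunov_coeffs (a b x y : ℝ) :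
    (1 / (2 * a ^ 2) + 1 / (2 * b ^ 2)) * (x ^ 2 + y ^ 2)
      + 2 * (1 / (4 * a ^ 2) - 1 / (4 * b ^ 2)) * (x ^ 2 - y ^ 2) = x ^ 2 / a ^ 2 + y ^ 2 / b ^ 2 := by
  ring

theorem spectrum_perturbed_in_ellipse_exterior_general {n : ℕ} (a b : ℝ)
    (A : Matrix (Fin n) (Fin n) ℂ)
    (H : Matrix (Fin n) (Fin n) ℂ) (hH : H.PosDef)
    (heq : H - ((1 / (2 * a ^ 2) + 1 / (2 * b ^ 2) : ℝ) : ℂ) • (Aᴴ * H * A)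
      - ((1 / (4 * a ^ 2) - 1 / (4 * b ^ 2) : ℝ) : ℂ) • (H * A ^ 2 + Aᴴ ^ 2 * H) = -1)
    (B : Matrix (Fin n) (Fin n) ℂ)
    (hB : (((1 / (2 * a ^ 2) + 1 / (2 * b ^ 2) : ℝ) : ℂ) • (Bᴴ * H * A + Aᴴ * H * B + Bᴴ * H * B)
      + ((1 / (4 * a ^ 2) - 1 / (4 * b ^ 2) : ℝ) : ℂ) •
        (H * (A * B + B * A + B ^ 2) + (A * B + B * A + B ^ 2)ᴴ * H) + 1).PosDef) :
    ∀ μ ∈ spectrum ℂ (A + B), 1 < μ.re ^ 2 / a ^ 2 + μ.im ^ 2 / b ^ 2 := by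
  intro μ hμ
  rw [← ellipse_equation_of_lyapunov_coeffs]
  refine one_lt_of_mem_spectrum_of_posDef_neg_ellipticLyapunov hH ?_ hμ
  rw [ellipticLyapunov_add, ellipticLyapunov, heq]
  convert hB using 1
  abel

/-- Perturbation theorem for the exterior of the ellipse: if the spectrum of `A`
lies in `E_e`, `H > 0` solves the elliptic Lyapunov-type equation with right-hand
side `-I`, and the perturbation `B` satisfies the matrix inequality (11), then the
spectrum of `A + B` also lies in `E_e`. -/
theorem spectrum_perturbed_in_ellipse_exterior {n : ℕ} (a b : ℝ) (hba : b < a) (hb : 0 < b)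
    (A : Matrix (Fin n) (Fin n) ℂ)
    (hA : ∀ μ ∈ spectrum ℂ A, 1 < μ.re ^ 2 / a ^ 2 + μ.im ^ 2 / b ^ 2)
    (H : Matrix (Fin n) (Fin n) ℂ) (hH : H.PosDef)
    (heq : H - ((1 / (2 * a ^ 2) + 1 / (2 * b ^ 2) : ℝ) : ℂ) • (Aᴴ * H * A)
      - ((1 / (4 * a ^ 2) - 1 / (4 * b ^ 2) : ℝ) : ℂ) • (H * A ^ 2 + Aᴴ ^ 2 * H) = -1)
    (B : Matrix (Fin n) (Fin n) ℂ)
    (hB : (((1 / (2 * a ^ 2) + 1 / (2 * b ^ 2) : ℝ) : ℂ) • (Bᴴ * H * A + Aᴴ * H * B + Bᴴ * H * B)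
      + ((1 / (4 * a ^ 2) - 1 / (4 * b ^ 2) : ℝ) : ℂ) •
        (H * (A * B + B * A + B ^ 2) + (A * B + B * A + B ^ 2)ᴴ * H) + 1).PosDef) :
    ∀ μ ∈ spectrum ℂ (A + B), 1 < μ.re ^ 2 / a ^ 2 + μ.im ^ 2 / b ^ 2 :=
  spectrum_perturbed_in_ellipse_exterior_general a b A H hH heq B hB
end

section
/- Let p > 0, let A be a complex n×n matrix whose spectrum belongs to P_i = {λ ∈ ℂ : (Im λ)² < 2p·Re λ}, and let H be a Hermitian positive definite matrix satisfying HA + A*H − (1/(2p))·A*HA + (1/(4p))·(HA² + (A*)²H) = I. If B is a complex n×n matrix such that HB + B*H − (1/(2p))·(A*HB + B*HA + B*HB) + (1/(4p))·(H(AB + BA + B²) + (AB + BA + B²)*H) > −I (this matrix plus I positive definite), then for every complex n×n matrix C the equation K(A+B) + (A+B)*K − (1/(2p))·(A+B)*K(A+B) + (1/(4p))·(K(A+B)² + ((A+B)*)²K) = C has a unique solution K. -/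
/-!
The map `φ X = X M + Mᴴ X - (1/2p) Mᴴ X M + (1/4p) (X M² + Mᴴ² X)` is `f(L, R)` for the commuting
operators `L X = Mᴴ X`, `R X = X M` and `f a b = a + b + (a - b)² / 4p`. A nonzero element of
`ker φ` yields a common eigenvector of `L` and `R`, with eigenvalues `a ∈ σ(Mᴴ)`, `b ∈ σ(M)` and
`f a b = 0`; but `Re f a b > 0` as soon as `a` and `b` lie in the parabola `(Im λ)² < 2p Re λ`.
Hence `φ` is bijective whenever `σ(M)` lies in the parabola.

For `M = A + B` the hypotheses say `H > 0` and `φ H = I + (perturbation) > 0`. Testing `φ H`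
against an eigenvector `v` of `M` with eigenvalue `μ` gives `f μ̄ μ · v*Hv > 0`, and
`f μ̄ μ = 2 Re μ - (Im μ)² / p`, so `σ(A + B)` lies in the parabola.
-/

open Matrix
open scoped ComplexOrder

namespace Module.End

variable {K V : Type*} [Field K] [IsAlgClosed K] [AddCommGroup V] [Module K V]
  [FiniteDimensional K V]

theorem exists_inf_eigenspace_ne_bot (f : End K V) {W : Submodule K V} (hW : W ≠ ⊥)
    (hf : ∀ x ∈ W, f x ∈ W) : ∃ a, W ⊓ f.eigenspace a ≠ ⊥ := by
  have : Nontrivial W := Submodule.nontrivial_iff_ne_bot.mpr hW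
  obtain ⟨a, ha⟩ := exists_eigenvalue (f.restrict hf)
  obtain ⟨x, hx, hx0⟩ := ha.exists_hasEigenvector
  have hfx : f x = a • (x : V) := congrArg Subtype.val (mem_eigenspace_iff.mp hx)
  refine ⟨a, fun h => hx0 (Subtype.ext ?_)⟩
  have hxW : (x : V) ∈ W ⊓ f.eigenspace a := ⟨x.2, mem_eigenspace_iff.mpr hfx⟩
  simpa [h] using hxW

theorem exists_inf_eigenspace_inf_eigenspace_ne_bot {f g : End K V} (hfg : Commute f g)
    {W : Submodule K V} (hW : W ≠ ⊥) (hf : ∀ x ∈ W, f x ∈ W) (hg : ∀ x ∈ W, g x ∈ W) :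
    ∃ a b, W ⊓ f.eigenspace a ⊓ g.eigenspace b ≠ ⊥ := by
  obtain ⟨a, ha⟩ := f.exists_inf_eigenspace_ne_bot hW hf
  refine ⟨a, g.exists_inf_eigenspace_ne_bot ha fun x ⟨hxW, hxa⟩ => ⟨hg x hxW, ?_⟩⟩
  rw [SetLike.mem_coe, mem_eigenspace_iff] at hxa ⊢
  rw [← mul_apply, hfg.eq, mul_apply, hxa, map_smul]

end Module.End

theorem spectrum.mem_of_mul_left_eq_smul {R A : Type*} [CommRing R] [Ring A] [Algebra R A]
    {a y : A} {r : R} (hy : y ≠ 0) (h : a * y = r • y) : r ∈ spectrum R a := by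
  refine spectrum.mem_iff.mpr fun hu => hy (hu.mul_right_eq_zero.mp ?_)
  rw [sub_mul, h, Algebra.algebraMap_eq_smul_one, smul_one_mul, sub_self]

theorem spectrum.mem_of_mul_right_eq_smul {R A : Type*} [CommRing R] [Ring A] [Algebra R A]
    {a y : A} {r : R} (hy : y ≠ 0) (h : y * a = r • y) : r ∈ spectrum R a := by
  refine spectrum.mem_iff.mpr fun hu => hy (hu.mul_left_eq_zero.mp ?_)
  rw [mul_sub, h, Algebra.algebraMap_eq_smul_one, mul_smul_one, sub_self]

def parabolaInterior (p : ℝ) : Set ℂ := {μ | μ.im ^ 2 < 2 * p * μ.re}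

noncomputable def parabolaForm (p : ℝ) (a b : ℂ) : ℂ :=
  a + b + ((1 / (4 * p) : ℝ) : ℂ) * (a - b) ^ 2

theorem parabolaForm_re_pos {p : ℝ} (hp : 0 < p) {a b : ℂ} (ha : a ∈ parabolaInterior p)
    (hb : b ∈ parabolaInterior p) : 0 < (parabolaForm p a b).re := by
  simp only [parabolaInterior, Set.mem_ofPred_eq] at ha hb
  have hre : (parabolaForm p a b).re
      = a.re + b.re + ((a.re - b.re) ^ 2 - (a.im - b.im) ^ 2) / (4 * p) := by
    simp only [parabolaForm, sq, Complex.add_re, Complex.mul_re, Complex.mul_im, Complex.sub_re,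
      Complex.sub_im, Complex.ofReal_re, Complex.ofReal_im]
    ring
  rw [hre]
  have : (a.im - b.im) ^ 2 < 4 * p * (a.re + b.re) := by
    nlinarith [sq_nonneg (a.im + b.im)]
  have : (a.im - b.im) ^ 2 / (4 * p) < a.re + b.re := by
    rw [div_lt_iff₀ (by positivity)]; linarith
  have : 0 ≤ (a.re - b.re) ^ 2 / (4 * p) := by positivity
  rw [sub_div]; linarith

theorem mem_parabolaInterior_of_parabolaForm_star_self_re_pos {p : ℝ} (hp : 0 < p) {μ : ℂ}
    (h : 0 < (parabolaForm p (star μ) μ).re) : μ ∈ parabolaInterior p := by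
  have hre : (parabolaForm p (star μ) μ).re = 2 * μ.re - μ.im ^ 2 / p := by
    simp only [parabolaForm, sq, Complex.add_re, Complex.mul_re, Complex.mul_im, Complex.sub_re,
      Complex.sub_im, Complex.ofReal_re, Complex.ofReal_im, Complex.star_def, Complex.conj_re,
      Complex.conj_im]
    field_simp
    ring
  rw [hre, sub_pos, div_lt_iff₀ hp] at h
  show μ.im ^ 2 < 2 * p * μ.re
  linarith

variable {n : Type*} [Fintype n] [DecidableEq n]

noncomputable def parabolicOp (p : ℝ) (M : Matrix n n ℂ) : Module.End ℂ (Matrix n n ℂ) where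
  toFun X := X * M + Mᴴ * X - ((1 / (2 * p) : ℝ) : ℂ) • (Mᴴ * X * M)
    + ((1 / (4 * p) : ℝ) : ℂ) • (X * M ^ 2 + Mᴴ ^ 2 * X)
  map_add' X Y := by simp only [add_mul, mul_add, smul_add]; abel
  map_smul' c X := by
    simp only [smul_mul_assoc, mul_smul_comm, smul_add, smul_sub, smul_comm c, RingHom.id_apply]

theorem parabolicOp_apply (p : ℝ) (M X : Matrix n n ℂ) :
    parabolicOp p M X = X * M + Mᴴ * X - ((1 / (2 * p) : ℝ) : ℂ) • (Mᴴ * X * M)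
      + ((1 / (4 * p) : ℝ) : ℂ) • (X * M ^ 2 + Mᴴ ^ 2 * X) :=
  rfl

theorem ofReal_one_div_two_mul (p : ℝ) :
    ((1 / (2 * p) : ℝ) : ℂ) = 2 * ((1 / (4 * p) : ℝ) : ℂ) := by
  push_cast; ring

theorem parabolicOp_eq_smul {p : ℝ} {M Y : Matrix n n ℂ} {a b : ℂ} (ha : Mᴴ * Y = a • Y)
    (hb : Y * M = b • Y) : parabolicOp p M Y = parabolaForm p a b • Y := by
  have hab : Mᴴ * Y * M = (a * b) • Y := by
    rw [mul_assoc, hb, mul_smul_comm, ha, smul_smul, mul_comm]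
  have hb2 : Y * M ^ 2 = b ^ 2 • Y := by
    rw [sq, ← mul_assoc, hb, smul_mul_assoc, hb, smul_smul, sq]
  have ha2 : Mᴴ ^ 2 * Y = a ^ 2 • Y := by
    rw [sq, mul_assoc, ha, mul_smul_comm, ha, smul_smul, sq]
  rw [parabolicOp_apply, hab, hb2, ha2, ha, hb, parabolaForm, ofReal_one_div_two_mul]
  module

theorem star_dotProduct_parabolicOp_mulVec {p : ℝ} {M : Matrix n n ℂ} {μ : ℂ} {v : n → ℂ}
    (hv : M *ᵥ v = μ • v) (X : Matrix n n ℂ) :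
    star v ⬝ᵥ (parabolicOp p M X *ᵥ v) = parabolaForm p (star μ) μ * (star v ⬝ᵥ X *ᵥ v) := by
  have hr : ∀ Y : Matrix n n ℂ, star v ⬝ᵥ (Y * M) *ᵥ v = μ * (star v ⬝ᵥ Y *ᵥ v) := fun Y => by
    rw [← mulVec_mulVec, hv, mulVec_smul, dotProduct_smul, smul_eq_mul]
  have hl : ∀ Y : Matrix n n ℂ, star v ⬝ᵥ (Mᴴ * Y) *ᵥ v = star μ * (star v ⬝ᵥ Y *ᵥ v) :=
    fun Y => by
      rw [← mulVec_mulVec, dotProduct_mulVec, ← star_mulVec, hv, star_smul, smul_dotProduct,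
        smul_eq_mul]
  simp only [parabolicOp_apply, add_mulVec, sub_mulVec, smul_mulVec, dotProduct_add,
    dotProduct_sub, dotProduct_smul, smul_eq_mul, sq, ← mul_assoc X, mul_assoc Mᴴ Mᴴ X, hr, hl]
  rw [parabolaForm, ofReal_one_div_two_mul]
  ring

theorem parabolicOp_conjTranspose_mul (p : ℝ) (M X : Matrix n n ℂ) :
    parabolicOp p M (Mᴴ * X) = Mᴴ * parabolicOp p M X := by
  simp only [parabolicOp_apply, mul_add, mul_sub, mul_smul_comm, sq, mul_assoc]

theorem parabolicOp_mul_self (p : ℝ) (M X : Matrix n n ℂ) :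
    parabolicOp p M (X * M) = parabolicOp p M X * M := by
  simp only [parabolicOp_apply, add_mul, sub_mul, smul_mul_assoc, sq, mul_assoc]

theorem spectrum_subset_parabolaInterior {p : ℝ} (hp : 0 < p) {M H : Matrix n n ℂ}
    (hH : H.PosDef) (hMH : (parabolicOp p M H).PosDef) :
    spectrum ℂ M ⊆ parabolaInterior p := by
  intro μ hμ
  rw [← spectrum_toLin', ← Module.End.hasEigenvalue_iff_mem_spectrum] at hμ
  obtain ⟨v, hv, hv0⟩ := hμ.exists_hasEigenvector
  rw [Module.End.mem_eigenspace_iff, toLin'_apply] at hv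
  have hpos := hMH.dotProduct_mulVec_pos hv0
  rw [star_dotProduct_parabolicOp_mulVec hv] at hpos
  obtain ⟨hHre, hHim⟩ := Complex.pos_iff.mp (hH.dotProduct_mulVec_pos hv0)
  have hre := (Complex.pos_iff.mp hpos).1
  rw [Complex.mul_re, ← hHim, mul_zero, sub_zero] at hre
  exact mem_parabolaInterior_of_parabolaForm_star_self_re_pos hp
    (pos_of_mul_pos_left hre hHre.le)

theorem parabolicOp_injective {p : ℝ} (hp : 0 < p) {M : Matrix n n ℂ}
    (hM : spectrum ℂ M ⊆ parabolaInterior p) : Function.Injective (parabolicOp p M) := by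
  rw [← LinearMap.ker_eq_bot]
  by_contra hker
  obtain ⟨a, b, hab⟩ := Module.End.exists_inf_eigenspace_inf_eigenspace_ne_bot
    (LinearMap.commute_mulLeft_right Mᴴ M) hker
    (fun X hX => by rw [LinearMap.mem_ker] at hX ⊢; simp [parabolicOp_conjTranspose_mul, hX])
    (fun X hX => by rw [LinearMap.mem_ker] at hX ⊢; simp [parabolicOp_mul_self, hX])
  obtain ⟨Y, hY, hY0⟩ := Submodule.exists_mem_ne_zero_of_ne_bot hab
  simp only [Submodule.mem_inf, LinearMap.mem_ker, Module.End.mem_eigenspace_iff,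
    LinearMap.mulLeft_apply, LinearMap.mulRight_apply] at hY
  obtain ⟨⟨hY, ha⟩, hb⟩ := hY
  rw [parabolicOp_eq_smul ha hb, smul_eq_zero] at hY
  have hstar : star a ∈ spectrum ℂ M := by
    rw [← Set.mem_star, ← spectrum.map_star]
    exact spectrum.mem_of_mul_left_eq_smul hY0 ha
  have ha' : a ∈ parabolaInterior p := by simpa [parabolaInterior] using hM hstar
  refine (parabolaForm_re_pos hp ha' (hM (spectrum.mem_of_mul_right_eq_smul hY0 hb))).ne' ?_
  rw [hY.resolve_right hY0, Complex.zero_re]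

theorem perturbed_parabola_equation_unique_solvable_general {n : ℕ} (p : ℝ) (hp : 0 < p)
    (A : Matrix (Fin n) (Fin n) ℂ)
    (H : Matrix (Fin n) (Fin n) ℂ) (hH : H.PosDef)
    (heq : H * A + Aᴴ * H - ((1 / (2 * p) : ℝ) : ℂ) • (Aᴴ * H * A)
      + ((1 / (4 * p) : ℝ) : ℂ) • (H * A ^ 2 + Aᴴ ^ 2 * H) = 1)
    (B : Matrix (Fin n) (Fin n) ℂ)
    (hB : (H * B + Bᴴ * H - ((1 / (2 * p) : ℝ) : ℂ) • (Aᴴ * H * B + Bᴴ * H * A + Bᴴ * H * B)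
      + ((1 / (4 * p) : ℝ) : ℂ) •
        (H * (A * B + B * A + B ^ 2) + (A * B + B * A + B ^ 2)ᴴ * H) + 1).PosDef) :
    ∀ C : Matrix (Fin n) (Fin n) ℂ,
      ∃! K : Matrix (Fin n) (Fin n) ℂ,
        K * (A + B) + (A + B)ᴴ * K - ((1 / (2 * p) : ℝ) : ℂ) • ((A + B)ᴴ * K * (A + B))
          + ((1 / (4 * p) : ℝ) : ℂ) • (K * (A + B) ^ 2 + ((A + B)ᴴ) ^ 2 * K) = C := by
  have hAB : (parabolicOp p (A + B) H).PosDef := by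
    convert hB using 1
    rw [← heq, parabolicOp_apply]
    simp only [conjTranspose_add, conjTranspose_mul, sq, mul_add, add_mul, smul_add, mul_assoc]
    module
  have hinj := parabolicOp_injective hp (spectrum_subset_parabolaInterior hp hH hAB)
  exact Function.Bijective.existsUnique ⟨hinj, LinearMap.injective_iff_surjective.mp hinj⟩

/-- Under the perturbation condition (15) for the interior of the parabola, the
parabolic Lyapunov-type equation for the perturbed matrix `A + B` is uniquely
solvable for every right-hand side `C`. -/
theorem perturbed_parabola_equation_unique_solvable {n : ℕ} (p : ℝ) (hp : 0 < p)
    (A : Matrix (Fin n) (Fin n) ℂ)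
    (hA : ∀ μ ∈ spectrum ℂ A, μ.im ^ 2 < 2 * p * μ.re)
    (H : Matrix (Fin n) (Fin n) ℂ) (hH : H.PosDef)
    (heq : H * A + Aᴴ * H - ((1 / (2 * p) : ℝ) : ℂ) • (Aᴴ * H * A)
      + ((1 / (4 * p) : ℝ) : ℂ) • (H * A ^ 2 + Aᴴ ^ 2 * H) = 1)
    (B : Matrix (Fin n) (Fin n) ℂ)
    (hB : (H * B + Bᴴ * H - ((1 / (2 * p) : ℝ) : ℂ) • (Aᴴ * H * B + Bᴴ * H * A + Bᴴ * H * B)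
      + ((1 / (4 * p) : ℝ) : ℂ) •
        (H * (A * B + B * A + B ^ 2) + (A * B + B * A + B ^ 2)ᴴ * H) + 1).PosDef) :
    ∀ C : Matrix (Fin n) (Fin n) ℂ,
      ∃! K : Matrix (Fin n) (Fin n) ℂ,
        K * (A + B) + (A + B)ᴴ * K - ((1 / (2 * p) : ℝ) : ℂ) • ((A + B)ᴴ * K * (A + B))
          + ((1 / (4 * p) : ℝ) : ℂ) • (K * (A + B) ^ 2 + ((A + B)ᴴ) ^ 2 * K) = C :=
  perturbed_parabola_equation_unique_solvable_general p hp A H hH heq B hB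
end
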